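/- Let B = {((a, s; 0, 1/a), 0) : a ∈ ℝ, a ≠ 0, s ∈ ℝ} ⊆ G be the group of upper triangular matrices in SL(2,ℝ), and set x_n = (I, (0, n)) ∈ G for n ∈ ℕ. Then the conjugates x_n B x_n⁻¹ converge in the Chabauty sense to the closed subgroup ℝ² = {(I, v) : v ∈ ℝ²}. -/

import Mathlib

open Filter Topology

noncomputable section

/-- `SL(2,ℝ)`. -/
abbrev SL2 := Matrix.SpecialLinearGroup (Fin 2) ℝ

/-- The topology on `SL(2,ℝ)` induced from the space of `2×2` real matrices. -/
instance : TopologicalSpace SL2 :=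
  TopologicalSpace.induced ((↑) : SL2 → Matrix (Fin 2) (Fin 2) ℝ) inferInstance

/-- The underlying type of the group `G = SL(2,ℝ) ⋉ ℝ²`, with the product topology. -/
abbrev GG := SL2 × (Fin 2 → ℝ)

/-- Multiplication in `G`: `(g,v)(g',v') = (gg', v + g·v')`. -/
def gmul (x y : GG) : GG := (x.1 * y.1, x.2 + (x.1 : Matrix (Fin 2) (Fin 2) ℝ).mulVec y.2)

/-- The identity element of `G`. -/
def gone : GG := (1, 0)

/-- Inversion in `G`. -/
def ginv (x : GG) : GG := (x.1⁻¹, -((x.1⁻¹ : SL2) : Matrix (Fin 2) (Fin 2) ℝ).mulVec x.2)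

/-- The conjugate `x H x⁻¹` of a subset `H ⊆ G` by `x ∈ G`. -/
def conjSet (x : GG) (H : Set GG) : Set GG := (fun h => gmul (gmul x h) (ginv x)) '' H

/-- `H` is a closed subgroup of `G`. -/
def IsClosedSubgroup (H : Set GG) : Prop :=
  IsClosed H ∧ gone ∈ H ∧ (∀ a ∈ H, ∀ b ∈ H, gmul a b ∈ H) ∧ (∀ a ∈ H, ginv a ∈ H)

/-- Chabauty convergence of a sequence of subsets of a topological space:
(i) every point of the limit is a limit of a sequence of points of the `S n`;
(ii) every limit of a subsequence of points of the `S n` lies in the limit set. -/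
def ChabautyTendsto {X : Type*} [TopologicalSpace X] (S : ℕ → Set X) (T : Set X) : Prop :=
  (∀ h ∈ T, ∃ u : ℕ → X, (∀ n, u n ∈ S n) ∧ Tendsto u atTop (𝓝 h)) ∧
  (∀ k : ℕ → ℕ, StrictMono k → ∀ u : ℕ → X, (∀ n, u n ∈ S (k n)) →
    ∀ x : X, Tendsto u atTop (𝓝 x) → x ∈ T)

/-- The Levi subgroup `L = SL(2,ℝ) × {0}`. -/
def Lset : Set GG := {x | x.2 = 0}

/-- The subgroup `N⁺ ⋉ ℝ² = {((1,s;0,1), v) : s ∈ ℝ, v ∈ ℝ²}`. -/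
def NplusR2 : Set GG := {x | ∃ s : ℝ, (x.1 : Matrix (Fin 2) (Fin 2) ℝ) = !![1, s; 0, 1]}

/-- The maximal compact subgroup `K = SO(2,ℝ) × {0}`. -/
def Kset : Set GG :=
  {x | ∃ θ : ℝ, (x.1 : Matrix (Fin 2) (Fin 2) ℝ) =
      !![Real.cos θ, Real.sin θ; -Real.sin θ, Real.cos θ] ∧ x.2 = 0}

/-- `V_c = {(I,(t,ct)) : t ∈ ℝ}`. -/
def Vc (c : ℝ) : Set GG := {x | ∃ t : ℝ, x.1 = 1 ∧ x.2 = ![t, c * t]}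

/-- `V_∞ = {(I,(0,t)) : t ∈ ℝ}`. -/
def Vinf : Set GG := {x | ∃ t : ℝ, x.1 = 1 ∧ x.2 = ![0, t]}

/-- `Ñ⁺ = {(±(1,s;0,1), 0) : s ∈ ℝ}`. -/
def Ntilde : Set GG :=
  {x | (∃ s : ℝ, (x.1 : Matrix (Fin 2) (Fin 2) ℝ) = !![1, s; 0, 1] ∨
      (x.1 : Matrix (Fin 2) (Fin 2) ℝ) = -!![1, s; 0, 1]) ∧ x.2 = 0}

/-- The diagonal subgroup `A = {(diag(a,1/a), 0) : a > 0}`. -/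
def Aset : Set GG :=
  {x | ∃ a : ℝ, 0 < a ∧ (x.1 : Matrix (Fin 2) (Fin 2) ℝ) = !![a, 0; 0, a⁻¹] ∧ x.2 = 0}

/-- `V_{(a,b,c)} = {((1,at;0,1), (ct + abt²/2, bt)) : t ∈ ℝ}`. -/
def Vabc (a b c : ℝ) : Set GG :=
  {x | ∃ t : ℝ, (x.1 : Matrix (Fin 2) (Fin 2) ℝ) = !![1, a * t; 0, 1] ∧
      x.2 = ![c * t + a * b * t ^ 2 / 2, b * t]}

/-- The upper triangular Borel subgroup `B` of `SL(2,ℝ)`, inside `G`. -/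
def Bset : Set GG :=
  {x | ∃ a s : ℝ, a ≠ 0 ∧ (x.1 : Matrix (Fin 2) (Fin 2) ℝ) = !![a, s; 0, a⁻¹] ∧ x.2 = 0}

/-- `W = {((1,s;0,1), (t,0)) : s, t ∈ ℝ} = N⁺ ⋉ {(t,0)}`. -/
def Wset : Set GG :=
  {x | ∃ s t : ℝ, (x.1 : Matrix (Fin 2) (Fin 2) ℝ) = !![1, s; 0, 1] ∧ x.2 = ![t, 0]}

/-- The Borel subgroup `P = B ⋉ ℝ²` of `G`. -/
def Pset : Set GG :=
  {x | ∃ a s : ℝ, a ≠ 0 ∧ (x.1 : Matrix (Fin 2) (Fin 2) ℝ) = !![a, s; 0, a⁻¹]}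

/-- The translation subgroup `ℝ² = {(I,v) : v ∈ ℝ²}`. -/
def R2set : Set GG := {x | x.1 = 1}

/-- The unipotent subgroup `N⁺ = {((1,s;0,1), 0) : s ∈ ℝ}`. -/
def Nplus : Set GG := {x | ∃ s : ℝ, (x.1 : Matrix (Fin 2) (Fin 2) ℝ) = !![1, s; 0, 1] ∧ x.2 = 0}

/-- `V₀ = {(I,(t,0)) : t ∈ ℝ}`. -/
def V0 : Set GG := {x | ∃ t : ℝ, x.1 = 1 ∧ x.2 = ![t, 0]}

def upperUnipotent (s : ℝ) : SL2 :=
  ⟨!![1, s; 0, 1], by simp [Matrix.det_fin_two_of]⟩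

/-! Conjugating by the translation `(I, v)` fixes the `SL(2,ℝ)`-part and turns the translation
part of `(g, 0)` into `(I - g) v`. For `v = t e₂` with `g ∈ B` upper triangular this is
`t (e₂ - g e₂)`; as `t → ∞` it stays bounded only if `g e₂ → e₂`, which together with
`det g = 1` forces `g → I`. Conversely `(I, w)` is the limit of the conjugates of
`((e^r, s; 0, e^{-r}), 0)` with `s = -w₁/t` and `e^{-r} = 1 - w₂/t`, whose translation
parts equal `w = (w₁, w₂)` once `t > w₂`. -/

open Matrix

theorem isEmbedding_coe_SL2 : Topology.IsEmbedding ((↑) : SL2 → Matrix (Fin 2) (Fin 2) ℝ) :=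
  ⟨⟨rfl⟩, Subtype.coe_injective⟩

instance : T2Space SL2 := isEmbedding_coe_SL2.t2Space

theorem SL2_eq_one_of_mulVec_e₂ (g : SL2) (hg : (g : Matrix (Fin 2) (Fin 2) ℝ) 1 0 = 0)
    (he : (g : Matrix (Fin 2) (Fin 2) ℝ) *ᵥ ![0, 1] = ![0, 1]) : g = 1 := by
  have h01 : (g : Matrix (Fin 2) (Fin 2) ℝ) 0 1 = 0 := by
    simpa [mulVec, dotProduct, Fin.sum_univ_two] using congrFun he 0
  have h11 : (g : Matrix (Fin 2) (Fin 2) ℝ) 1 1 = 1 := by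
    simpa [mulVec, dotProduct, Fin.sum_univ_two] using congrFun he 1
  have h00 : (g : Matrix (Fin 2) (Fin 2) ℝ) 0 0 = 1 := by
    have hdet := g.det_coe
    rwa [det_fin_two, h01, h11, mul_one, zero_mul, sub_zero] at hdet
  ext i j
  fin_cases i <;> fin_cases j <;> simp [h00, h01, h11, hg]

theorem isClosedSubgroup_R2set : IsClosedSubgroup R2set := by
  refine ⟨?_, rfl, fun a ha b hb => ?_, fun a ha => ?_⟩
  · exact isClosed_singleton.preimage continuous_fst
  · simp_all [R2set, gmul]
  · simp_all [R2set, ginv]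

theorem gmul_translation_conj (v : Fin 2 → ℝ) (h : GG) :
    gmul (gmul ((1 : SL2), v) h) (ginv ((1 : SL2), v)) =
      (h.1, v + h.2 - (h.1 : Matrix (Fin 2) (Fin 2) ℝ) *ᵥ v) := by
  simp [gmul, ginv, mulVec_neg, sub_eq_add_neg, add_assoc]

theorem conjSet_translation_Bset_subset (v : Fin 2 → ℝ) :
    conjSet ((1 : SL2), v) Bset ⊆
      {x | (x.1 : Matrix (Fin 2) (Fin 2) ℝ) 1 0 = 0 ∧
        x.2 = v - (x.1 : Matrix (Fin 2) (Fin 2) ℝ) *ᵥ v} := by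
  rintro _ ⟨h, ⟨a, s, -, hmat, hvec⟩, rfl⟩
  refine ⟨?_, ?_⟩ <;> simp [gmul_translation_conj, hmat, hvec]

theorem tendsto_zero_of_tendsto_smul_of_tendsto_atTop {E : Type*} [NormedAddCommGroup E]
    [NormedSpace ℝ E] {t : ℕ → ℝ} {w : ℕ → E} {v : E} (ht : Tendsto t atTop atTop)
    (hv : Tendsto (fun n => t n • w n) atTop (𝓝 v)) : Tendsto w atTop (𝓝 0) := by
  have h := (tendsto_inv_atTop_zero.comp ht).smul hv
  rw [zero_smul] at h
  refine h.congr' ?_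
  filter_upwards [ht.eventually_ne_atTop 0] with n hn
  simp [smul_smul, hn]

theorem mem_R2set_of_tendsto_conjSet_Bset {t : ℕ → ℝ} (ht : Tendsto t atTop atTop) {u : ℕ → GG}
    (hu : ∀ n, u n ∈ conjSet ((1 : SL2), ![0, t n]) Bset) {x : GG}
    (hx : Tendsto u atTop (𝓝 x)) : x ∈ R2set := by
  set e₂ : Fin 2 → ℝ := ![0, 1]
  have hM : Tendsto (fun n => ((u n).1 : Matrix (Fin 2) (Fin 2) ℝ)) atTop
      (𝓝 (x.1 : Matrix (Fin 2) (Fin 2) ℝ)) :=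
    ((isEmbedding_coe_SL2.continuous.comp continuous_fst).tendsto x).comp hx
  have hsnd : ∀ n, (u n).2 = t n • (e₂ - ((u n).1 : Matrix (Fin 2) (Fin 2) ℝ) *ᵥ e₂) := by
    intro n
    have hv : ![0, t n] = t n • e₂ := by simp [e₂]
    rw [(conjSet_translation_Bset_subset _ (hu n)).2, hv, mulVec_smul, smul_sub]
  have hcol : Tendsto (fun n => e₂ - ((u n).1 : Matrix (Fin 2) (Fin 2) ℝ) *ᵥ e₂) atTop (𝓝 0) :=
    tendsto_zero_of_tendsto_smul_of_tendsto_atTop ht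
      (((continuous_snd.tendsto x).comp hx).congr hsnd)
  have hcont : Continuous fun M : Matrix (Fin 2) (Fin 2) ℝ => e₂ - M *ᵥ e₂ := by fun_prop
  have hcol' := (hcont.tendsto _).comp hM
  refine SL2_eq_one_of_mulVec_e₂ x.1 ?_ ?_
  · exact tendsto_nhds_unique (tendsto_pi_nhds.1 (tendsto_pi_nhds.1 hM 1) 0)
      (tendsto_const_nhds.congr fun n => ((conjSet_translation_Bset_subset _ (hu n)).1).symm)
  · exact (sub_eq_zero.1 (tendsto_nhds_unique hcol' hcol)).symm

def borelExp (r s : ℝ) : SL2 :=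
  ⟨!![Real.exp r, s; 0, Real.exp (-r)], by simp [det_fin_two_of, ← Real.exp_add]⟩

theorem borelExp_mem_Bset (r s : ℝ) : ((borelExp r s, 0) : GG) ∈ Bset :=
  ⟨Real.exp r, s, Real.exp_ne_zero r, by simp [borelExp, Real.exp_neg], rfl⟩

theorem borelExp_zero_zero : borelExp 0 0 = 1 := by
  ext i j
  fin_cases i <;> fin_cases j <;> simp [borelExp]

theorem continuous_borelExp : Continuous fun p : ℝ × ℝ => borelExp p.1 p.2 := by
  refine continuous_induced_rng.2 (continuous_pi fun i => continuous_pi fun j => ?_)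
  fin_cases i <;> fin_cases j <;> simp [borelExp] <;> fun_prop

theorem exists_tendsto_conjSet_Bset_of_mem_R2set {t : ℕ → ℝ} (ht : Tendsto t atTop atTop)
    {x : GG} (hx : x ∈ R2set) :
    ∃ u : ℕ → GG, (∀ n, u n ∈ conjSet ((1 : SL2), ![0, t n]) Bset) ∧ Tendsto u atTop (𝓝 x) := by
  obtain ⟨g, w⟩ := x
  obtain rfl : g = 1 := hx
  set r : ℕ → ℝ := fun n => -Real.log (1 - w 1 / t n)
  set s : ℕ → ℝ := fun n => -w 0 / t n
  refine ⟨fun n => gmul (gmul ((1 : SL2), ![0, t n]) (borelExp (r n) (s n), 0))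
    (ginv ((1 : SL2), ![0, t n])), fun n => ⟨_, borelExp_mem_Bset _ _, rfl⟩, ?_⟩
  simp only [gmul_translation_conj]
  have hw : ∀ i, Tendsto (fun n => w i / t n) atTop (𝓝 0) := fun i =>
    tendsto_const_nhds.div_atTop ht
  have hr : Tendsto r atTop (𝓝 0) := by
    have h1 : Tendsto (fun n => 1 - w 1 / t n) atTop (𝓝 1) := by
      simpa using tendsto_const_nhds.sub (hw 1)
    simpa using ((Real.continuousAt_log one_ne_zero).tendsto.comp h1).neg
  have hs : Tendsto s atTop (𝓝 0) := by simpa [s, neg_div] using (hw 0).neg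
  refine Tendsto.prodMk_nhds ?_ (tendsto_const_nhds.congr' ?_)
  · have hg := (continuous_borelExp.tendsto (0, 0)).comp (hr.prodMk_nhds hs)
    rw [borelExp_zero_zero] at hg
    exact hg
  · filter_upwards [ht.eventually_gt_atTop (max (w 1) 0)] with n hn
    have htpos : 0 < t n := lt_of_le_of_lt (le_max_right _ _) hn
    have hexp : Real.exp (-r n) = 1 - w 1 / t n := by
      rw [neg_neg, Real.exp_log]
      rw [sub_pos, div_lt_one htpos]
      exact lt_of_le_of_lt (le_max_left _ _) hn
    ext i
    fin_cases i
    · simp [borelExp, s]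
      field_simp
    · simp [borelExp, hexp]
      field_simp
      ring

/-- With `x_n = (I,(0,n))`, the conjugates `x_n B x_n⁻¹` converge in the Chabauty sense to
the closed subgroup `ℝ² = {(I,v) : v ∈ ℝ²}`. -/
theorem stmt_19 :
    ChabautyTendsto (fun n => conjSet ((1 : SL2), ![0, (n : ℝ)]) Bset) R2set ∧
      IsClosedSubgroup R2set := by
  have htend : Tendsto (fun n : ℕ => (n : ℝ)) atTop atTop := tendsto_natCast_atTop_atTop
  refine ⟨⟨fun x hx => exists_tendsto_conjSet_Bset_of_mem_R2set htend hx, ?_⟩,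
    isClosedSubgroup_R2set⟩
  intro k hk u hu x hx
  exact mem_R2set_of_tendsto_conjSet_Bset (htend.comp hk.tendsto_atTop) hu hx

end
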